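/- For the k-player game G in which player j receives an independent uniform bit x_j and outputs (i_j, a_j) ∈ [k]×{0,1} with winning condition (∃i: i = i_1 = ... = i_k and x_i = ⊕_{j≠i} a_j), the k-fold parallel repetition G^{⊗k} has classical value at least 1/2. In particular val(G^{⊗k}) = val(G) = 1/2. -/

import Mathlib

/-- Winning condition of the `k`-fold repetition of the k-player XOR-agreement game:
player `j` receives `k` independent uniform bits `x j : Fin k → Bool` and outputs, for
each repetition `ℓ`, a pair `g j (x j) ℓ = (i, a) : Fin k × Bool`.  The players win iff
in every repetition `ℓ` there is a common index `i` output by all players, and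
`x i ℓ` equals the XOR of the answers of players `j ≠ i` in repetition `ℓ`. -/
def repWin (k : ℕ) (g : Fin k → (Fin k → Bool) → Fin k → Fin k × Bool)
    (x : Fin k → Fin k → Bool) : Prop :=
  ∀ ℓ : Fin k, ∃ i : Fin k, (∀ j, (g j (x j) ℓ).1 = i) ∧
    ((if x i ℓ then (1 : ZMod 2) else 0) =
      ∑ j ∈ Finset.univ.erase i, (if (g j (x j) ℓ).2 then (1 : ZMod 2) else 0))

open Classical in
/-- Winning probability of a deterministic strategy `g` for the repeated game, over
independent uniform input bits (each player gets `k` bits, one per repetition). -/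
noncomputable def repWinProb (k : ℕ) (g : Fin k → (Fin k → Bool) → Fin k → Fin k × Bool) : ℝ :=
  (∑ x : Fin k → Fin k → Bool, if repWin k g x then (1 : ℝ) else 0) / 2 ^ (k * k)


open Finset

set_option linter.unusedSectionVars false
variable {α : Type*} [Fintype α] [DecidableEq α]

/-- pairing helper: if σ is an involution preserving Q and toggling P on Q,
then the Q∧P part is exactly half of Q. -/
lemma pair_up (P Q : α → Prop) [DecidablePred P] [DecidablePred Q] (σ : α → α)
    (hσ : ∀ x, σ (σ x) = x) (hQ : ∀ x, Q x → Q (σ x))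
    (hP : ∀ x, Q x → (P x ↔ ¬ P (σ x))) :
    (univ.filter (fun x => Q x ∧ P x)).card * 2 = (univ.filter Q).card := by
  have h1 : (univ.filter (fun x => Q x ∧ P x)).card
      = (univ.filter (fun x => Q x ∧ ¬ P x)).card := by
    apply Finset.card_bij' (fun x _ => σ x) (fun x _ => σ x)
    · intro a ha
      simp only [mem_filter, mem_univ, true_and] at ha ⊢
      exact ⟨hQ a ha.1, ((hP a ha.1).mp ha.2)⟩
    · intro a ha
      simp only [mem_filter, mem_univ, true_and] at ha ⊢
      exact ⟨hQ a ha.1, (hP (σ a) (hQ a ha.1)).mpr (by rw [hσ]; exact ha.2)⟩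
    · intro a _; exact hσ a
    · intro a _; exact hσ a
  have h2 : (univ.filter (fun x => Q x ∧ P x)).card
      + (univ.filter (fun x => Q x ∧ ¬ P x)).card = (univ.filter Q).card := by
    rw [← Finset.filter_filter, ← Finset.filter_filter, Finset.card_filter_add_card_filter_not]
  omega

lemma half_card (P : α → Prop) [DecidablePred P] (σ : α → α)
    (hσ : ∀ x, σ (σ x) = x) (hP : ∀ x, P x ↔ ¬ P (σ x)) :
    (univ.filter P).card * 2 = Fintype.card α := by
  have := pair_up P (fun _ => True) σ hσ (fun _ _ => trivial) (fun x _ => hP x)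
  simpa using this

lemma boolIte_eq (b : Bool) (s : ZMod 2) :
    ((if b then (1 : ZMod 2) else 0) = s) ↔ (b = if s = 1 then true else false) := by
  revert b s; decide

lemma zmod2_succ_ne (s : ZMod 2) : s + 1 = 0 ↔ ¬ (s = 0) := by revert s; decide

def gstar (k : ℕ) : Fin k → (Fin k → Bool) → Fin k → Fin k × Bool := fun j x ℓ => (ℓ, x j)

lemma repWin_gstar (k : ℕ) (hk : 1 ≤ k) (x : Fin k → Fin k → Bool) :
    repWin k (gstar k) x ↔ (∑ j, (if x j j then (1 : ZMod 2) else 0)) = 0 := by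
  constructor
  · intro h
    obtain ⟨i, hi, hpar⟩ := h ⟨0, hk⟩
    have hie : (⟨0, hk⟩ : Fin k) = i := hi i
    rw [← hie] at hpar
    change (if x ⟨0, hk⟩ ⟨0, hk⟩ then (1 : ZMod 2) else 0)
      = ∑ j ∈ Finset.univ.erase ⟨0, hk⟩, (if x j j then (1 : ZMod 2) else 0) at hpar
    have h2 := Finset.add_sum_erase Finset.univ
      (fun j => (if x j j then (1 : ZMod 2) else 0)) (Finset.mem_univ (⟨0, hk⟩ : Fin k))
    rw [← hpar, CharTwo.add_self_eq_zero] at h2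
    exact h2.symm
  · intro h ℓ
    refine ⟨ℓ, fun j => rfl, ?_⟩
    show (if x ℓ ℓ then (1 : ZMod 2) else 0)
      = ∑ j ∈ Finset.univ.erase ℓ, (if x j j then (1 : ZMod 2) else 0)
    have h2 := Finset.add_sum_erase Finset.univ
      (fun j => (if x j j then (1 : ZMod 2) else 0)) (Finset.mem_univ ℓ)
    rw [h] at h2
    have := eq_neg_of_add_eq_zero_right h2
    rw [this, CharTwo.neg_eq]

lemma ite_bnot (b : Bool) : (if !b then (1 : ZMod 2) else 0) = (if b then (1 : ZMod 2) else 0) + 1 := by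
  cases b <;> decide

lemma zmod2_ne_zero (t : ZMod 2) (h : ¬ t = 0) : t = 1 := by revert t; decide

lemma count_diag (k : ℕ) (hk : 1 ≤ k) :
    (Finset.univ.filter (fun x : Fin k → Fin k → Bool =>
      (∑ j, (if x j j then (1 : ZMod 2) else 0)) = 0)).card * 2 = 2 ^ (k * k) := by
  set e : Fin k := ⟨0, hk⟩
  have hc := half_card (α := Fin k → Fin k → Bool)
    (fun x => (∑ j, (if x j j then (1 : ZMod 2) else 0)) = 0)
    (fun x => Function.update x e (Function.update (x e) e (!(x e e))))
    (fun x => by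
      funext j
      by_cases hj : j = e
      · subst hj
        simp [Function.update_idem, Function.update_self, Bool.not_not, Function.update_eq_self]
      · simp [Function.update_of_ne hj])
    (fun x => by
      beta_reduce
      have hsum : ∀ (y : Fin k → Fin k → Bool),
          (∑ j, (if y j j then (1 : ZMod 2) else 0))
          = (if y e e then (1 : ZMod 2) else 0)
            + ∑ j ∈ Finset.univ.erase e, (if y j j then (1 : ZMod 2) else 0) :=
        fun y => (Finset.add_sum_erase Finset.univ _ (Finset.mem_univ e)).symm
      rw [hsum, hsum]
      have h1 : ∑ j ∈ Finset.univ.erase e,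
          (if (Function.update x e (Function.update (x e) e (!(x e e)))) j j then (1 : ZMod 2) else 0)
          = ∑ j ∈ Finset.univ.erase e, (if x j j then (1 : ZMod 2) else 0) := by
        refine Finset.sum_congr rfl (fun j hj => ?_)
        rw [Function.update_of_ne (Finset.ne_of_mem_erase hj)]
      rw [h1, Function.update_self, Function.update_self, ite_bnot]
      generalize (if x e e then (1 : ZMod 2) else 0) = a
      generalize (∑ j ∈ Finset.univ.erase e, (if x j j then (1 : ZMod 2) else 0)) = s
      constructor
      · intro hzero hone
        rw [show a + 1 + s = (a + s) + 1 by ring, hzero] at hone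
        exact absurd hone (by decide)
      · intro hne
        linear_combination zmod2_ne_zero _ hne)
  rw [hc]
  have : Fintype.card (Fin k → Fin k → Bool) = 2 ^ (k * k) := by
    rw [Fintype.card_fun, Fintype.card_fun]
    simp [← pow_mul]
  rw [this]

lemma card_X (k : ℕ) : Fintype.card (Fin k → Fin k → Bool) = 2 ^ (k * k) := by
  rw [Fintype.card_fun, Fintype.card_fun]
  simp [← pow_mul]

open Classical in
lemma prob_eq (k : ℕ) (g : Fin k → (Fin k → Bool) → Fin k → Fin k × Bool) :
    repWinProb k g = ((Finset.univ.filter (repWin k g)).card : ℝ) / 2 ^ (k * k) := by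
  rw [repWinProb, Finset.sum_boole]

open Classical in
lemma lower_bound (k : ℕ) (hk : 1 ≤ k) : 1 / 2 ≤ repWinProb k (gstar k) := by
  rw [prob_eq]
  have hfil : Finset.univ.filter (repWin k (gstar k))
      = Finset.univ.filter (fun x : Fin k → Fin k → Bool =>
          (∑ j, (if x j j then (1 : ZMod 2) else 0)) = 0) :=
    Finset.filter_congr (fun x _ => repWin_gstar k hk x)
  have hcount := count_diag k hk
  rw [← hfil] at hcount
  rw [div_le_div_iff₀ (by norm_num) (by positivity)]
  have := congrArg (Nat.cast : ℕ → ℝ) hcount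
  push_cast at this ⊢
  linarith

section UB

variable (k : ℕ) (g : Fin k → (Fin k → Bool) → Fin k → Fin k × Bool)

/-- winning the repetition `ℓ` -/
def WinAt (ℓ : Fin k) (x : Fin k → Fin k → Bool) : Prop :=
  ∃ i : Fin k, (∀ j, (g j (x j) ℓ).1 = i) ∧
    ((if x i ℓ then (1 : ZMod 2) else 0) =
      ∑ j ∈ Finset.univ.erase i, (if (g j (x j) ℓ).2 then (1 : ZMod 2) else 0))

/-- winning the repetition `ℓ` with common index `i` -/
def A (ℓ i : Fin k) (x : Fin k → Fin k → Bool) : Prop :=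
  (∀ j, (g j (x j) ℓ).1 = i) ∧
    ((if x i ℓ then (1 : ZMod 2) else 0) =
      ∑ j ∈ Finset.univ.erase i, (if (g j (x j) ℓ).2 then (1 : ZMod 2) else 0))

/-- the bool that player `i` would need as its `ℓ`-th input bit -/
def cB (ℓ i : Fin k) (x : Fin k → Fin k → Bool) : Bool :=
  if (∑ j ∈ Finset.univ.erase i, (if (g j (x j) ℓ).2 then (1 : ZMod 2) else 0)) = 1
  then true else false

def D (ℓ i : Fin k) (x : Fin k → Fin k → Bool) : Prop :=
  (∀ j, j ≠ i → (g j (x j) ℓ).1 = i) ∧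
    (g i (Function.update (x i) ℓ (cB k g ℓ i x)) ℓ).1 = i

def Flip (i ℓ : Fin k) (x : Fin k → Fin k → Bool) : Fin k → Fin k → Bool :=
  Function.update x i (Function.update (x i) ℓ (!(x i ℓ)))

lemma flip_ne (i ℓ : Fin k) (x : Fin k → Fin k → Bool) (j : Fin k) (hj : j ≠ i) :
    Flip k i ℓ x j = x j := Function.update_of_ne hj _ _

lemma flip_flip' (i ℓ : Fin k) (x : Fin k → Fin k → Bool) : Flip k i ℓ (Flip k i ℓ x) = x := by
  funext j
  by_cases hj : j = i
  · subst hj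
    simp [Flip, Function.update_idem, Function.update_self, Bool.not_not,
      Function.update_eq_self]
  · simp [Flip, Function.update_of_ne hj]

lemma cB_flip (ℓ i : Fin k) (x : Fin k → Fin k → Bool) :
    cB k g ℓ i (Flip k i ℓ x) = cB k g ℓ i x := by
  unfold cB
  have hs : (∑ j ∈ Finset.univ.erase i, (if (g j (Flip k i ℓ x j) ℓ).2 then (1 : ZMod 2) else 0))
      = ∑ j ∈ Finset.univ.erase i, (if (g j (x j) ℓ).2 then (1 : ZMod 2) else 0) :=
    Finset.sum_congr rfl (fun j hj => by rw [flip_ne k i ℓ x j (Finset.ne_of_mem_erase hj)])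
  rw [hs]

lemma D_flip (ℓ i : Fin k) (x : Fin k → Fin k → Bool) :
    D k g ℓ i (Flip k i ℓ x) ↔ D k g ℓ i x := by
  unfold D
  rw [cB_flip]
  constructor
  · rintro ⟨h1, h2⟩
    refine ⟨fun j hj => ?_, ?_⟩
    · rw [← flip_ne k i ℓ x j hj]; exact h1 j hj
    · rw [show Flip k i ℓ x i = Function.update (x i) ℓ (!(x i ℓ)) from
        Function.update_self _ _ _, Function.update_idem] at h2
      exact h2
  · rintro ⟨h1, h2⟩
    refine ⟨fun j hj => ?_, ?_⟩
    · rw [flip_ne k i ℓ x j hj]; exact h1 j hj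
    · rw [show Flip k i ℓ x i = Function.update (x i) ℓ (!(x i ℓ)) from
        Function.update_self _ _ _, Function.update_idem]
      exact h2

lemma A_iff (ℓ i : Fin k) (x : Fin k → Fin k → Bool) :
    A k g ℓ i x ↔ D k g ℓ i x ∧ x i ℓ = cB k g ℓ i x := by
  unfold A D cB
  rw [boolIte_eq]
  constructor
  · rintro ⟨h1, h2⟩
    refine ⟨⟨fun j _ => h1 j, ?_⟩, h2⟩
    rw [show (if (∑ j ∈ Finset.univ.erase i, (if (g j (x j) ℓ).2 then (1 : ZMod 2) else 0)) = 1
        then true else false) = x i ℓ from h2.symm, Function.update_eq_self]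
    exact h1 i
  · rintro ⟨⟨h1, h2⟩, h3⟩
    refine ⟨fun j => ?_, h3⟩
    by_cases hj : j = i
    · subst hj
      rw [show (if (∑ j ∈ Finset.univ.erase j, (if (g j (x j) ℓ).2 then (1 : ZMod 2) else 0)) = 1
        then true else false) = x j ℓ from h3.symm, Function.update_eq_self] at h2
      exact h2
    · exact h1 j hj

end UB

open Classical

open Classical in
lemma A_half (k : ℕ) (g : Fin k → (Fin k → Bool) → Fin k → Fin k × Bool) (ℓ i : Fin k) :
    (Finset.univ.filter (A k g ℓ i)).card * 2 = (Finset.univ.filter (D k g ℓ i)).card := by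
  have hfil : Finset.univ.filter (A k g ℓ i)
      = Finset.univ.filter (fun x => D k g ℓ i x ∧ x i ℓ = cB k g ℓ i x) :=
    Finset.filter_congr (fun x _ => A_iff k g ℓ i x)
  rw [hfil]
  refine pair_up _ _ (Flip k i ℓ) (flip_flip' k i ℓ)
    (fun x hx => (D_flip k g ℓ i x).mpr hx) (fun x _ => ?_)
  rw [cB_flip]
  have hb : Flip k i ℓ x i ℓ = !(x i ℓ) := by
    rw [show Flip k i ℓ x i = Function.update (x i) ℓ (!(x i ℓ)) from Function.update_self _ _ _,
      Function.update_self]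
  rw [hb]
  cases x i ℓ <;> cases cB k g ℓ i x <;> simp

open Classical in
lemma winAt_decomp (k : ℕ) (g : Fin k → (Fin k → Bool) → Fin k → Fin k × Bool) (ℓ : Fin k) :
    (Finset.univ.filter (WinAt k g ℓ)).card
      = ∑ i, (Finset.univ.filter (A k g ℓ i)).card := by
  have hfil : Finset.univ.filter (WinAt k g ℓ)
      = Finset.univ.biUnion (fun i => Finset.univ.filter (A k g ℓ i)) := by
    ext x
    simp only [Finset.mem_filter, Finset.mem_biUnion, Finset.mem_univ, true_and]
    exact Iff.rfl
  rw [hfil]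
  rw [Finset.card_biUnion]
  intro i _ i' _ hii'
  simp only [Finset.disjoint_left, Finset.mem_filter, Finset.mem_univ, true_and]
  rintro x ⟨h1, _⟩ ⟨h1', _⟩
  exact hii' ((h1 i').symm.trans (h1' i'))

open Classical in
lemma D_bound (k : ℕ) (hk : 3 ≤ k) (g : Fin k → (Fin k → Bool) → Fin k → Fin k × Bool)
    (ℓ : Fin k) :
    ∑ i, (Finset.univ.filter (D k g ℓ i)).card ≤ 2 ^ (k * k) := by
  have hdisj : ∀ i ∈ Finset.univ, ∀ i' ∈ Finset.univ, i ≠ i' →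
      Disjoint (Finset.univ.filter (D k g ℓ i)) (Finset.univ.filter (D k g ℓ i')) := by
    intro i _ i' _ hii'
    simp only [Finset.disjoint_left, Finset.mem_filter, Finset.mem_univ, true_and]
    rintro x ⟨h1, _⟩ ⟨h1', _⟩
    have hne : (({i, i'} : Finset (Fin k))ᶜ).Nonempty := by
      rw [← Finset.card_pos, Finset.card_compl]
      have h2 : ({i, i'} : Finset (Fin k)).card ≤ 2 :=
        le_trans (Finset.card_insert_le _ _) (by simp)
      have h3 : Fintype.card (Fin k) = k := Fintype.card_fin k
      omega
    obtain ⟨j, hj⟩ := hne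
    simp only [Finset.mem_compl, Finset.mem_insert, Finset.mem_singleton, not_or] at hj
    exact hii' (((h1 j hj.1).symm.trans (h1' j hj.2)))
  calc ∑ i, (Finset.univ.filter (D k g ℓ i)).card
      = (Finset.univ.biUnion (fun i => Finset.univ.filter (D k g ℓ i))).card :=
        (Finset.card_biUnion hdisj).symm
    _ ≤ (Finset.univ : Finset (Fin k → Fin k → Bool)).card := Finset.card_le_card
        (Finset.subset_univ _)
    _ = 2 ^ (k * k) := by rw [Finset.card_univ, card_X]

open Classical in
lemma winAt_bound_ge3 (k : ℕ) (hk : 3 ≤ k) (g : Fin k → (Fin k → Bool) → Fin k → Fin k × Bool)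
    (ℓ : Fin k) :
    (Finset.univ.filter (WinAt k g ℓ)).card * 2 ≤ 2 ^ (k * k) := by
  rw [winAt_decomp, Finset.sum_mul]
  calc ∑ i, (Finset.univ.filter (A k g ℓ i)).card * 2
      = ∑ i, (Finset.univ.filter (D k g ℓ i)).card :=
        Finset.sum_congr rfl (fun i _ => A_half k g ℓ i)
    _ ≤ 2 ^ (k * k) := D_bound k hk g ℓ

open Classical in
lemma winAt_bound_1 (g : Fin 1 → (Fin 1 → Bool) → Fin 1 → Fin 1 × Bool) (ℓ : Fin 1) :
    (Finset.univ.filter (WinAt 1 g ℓ)).card * 2 ≤ 2 ^ (1 * 1) := by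
  have hsub : Finset.univ.filter (WinAt 1 g ℓ)
      ⊆ Finset.univ.filter (fun x : Fin 1 → Fin 1 → Bool => x ℓ ℓ = false) := by
    intro x hx
    simp only [Finset.mem_filter, Finset.mem_univ, true_and] at hx ⊢
    obtain ⟨i, _, hpar⟩ := hx
    have hi : i = ℓ := Subsingleton.elim i ℓ
    subst hi
    have : Finset.univ.erase i = (∅ : Finset (Fin 1)) := by
      apply Finset.eq_empty_of_forall_notMem
      intro j hj
      exact (Finset.ne_of_mem_erase hj) (Subsingleton.elim j i)
    rw [this, Finset.sum_empty] at hpar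
    by_contra hfalse
    rw [show x i i = true from eq_true_of_ne_false hfalse] at hpar
    exact one_ne_zero hpar
  have h1 : (Finset.univ.filter (fun x : Fin 1 → Fin 1 → Bool => x ℓ ℓ = false)).card ≤ 1 := by
    rw [Finset.card_le_one]
    intro a ha b hb
    simp only [Finset.mem_filter, Finset.mem_univ, true_and] at ha hb
    funext j m
    rw [Subsingleton.elim j ℓ, Subsingleton.elim m ℓ, ha, hb]
  have h2 := Finset.card_le_card hsub
  calc (Finset.univ.filter (WinAt 1 g ℓ)).card * 2 ≤ 1 * 2 :=
        Nat.mul_le_mul_right 2 (le_trans h2 h1)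
    _ ≤ 2 ^ (1 * 1) := by norm_num

/-- one-bit version of the game, single repetition, for k = 2 -/
def Win1 (h : Fin 2 → Bool → Fin 2 × Bool) (b : Fin 2 → Bool) : Prop :=
  ∃ i : Fin 2, (∀ j, (h j (b j)).1 = i) ∧
    ((if b i then (1 : ZMod 2) else 0) =
      ∑ j ∈ Finset.univ.erase i, (if (h j (b j)).2 then (1 : ZMod 2) else 0))

set_option maxRecDepth 20000 in
lemma win1_bound_aux : ∀ h : Fin 2 → Bool → Fin 2 × Bool,
    (Finset.univ.filter (fun b : Fin 2 → Bool => ∃ i : Fin 2,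
      (∀ j, (h j (b j)).1 = i) ∧
      ((if b i then (1 : ZMod 2) else 0) =
        ∑ j ∈ Finset.univ.erase i, (if (h j (b j)).2 then (1 : ZMod 2) else 0)))).card ≤ 2 := by
  decide

open Classical in
lemma win1_bound (h : Fin 2 → Bool → Fin 2 × Bool) :
    (Finset.univ.filter (Win1 h)).card ≤ 2 := by
  have hfil : Finset.univ.filter (Win1 h)
      = Finset.univ.filter (fun b : Fin 2 → Bool => ∃ i : Fin 2,
      (∀ j, (h j (b j)).1 = i) ∧
      ((if b i then (1 : ZMod 2) else 0) =
        ∑ j ∈ Finset.univ.erase i, (if (h j (b j)).2 then (1 : ZMod 2) else 0))) :=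
    Finset.filter_congr (fun b _ => Iff.rfl)
  rw [hfil]
  exact win1_bound_aux h

/-- assemble an input for the 2-player repeated game from slices -/
def E2 : ((Fin 2 → Bool) × (Fin 2 → Bool)) ≃ (Fin 2 → Fin 2 → Bool) where
  toFun p := fun j m => if m = 0 then p.2 j else p.1 j
  invFun x := (fun j => x j 1, fun j => x j 0)
  left_inv p := by
    ext j <;> simp
  right_inv x := by
    funext j m
    fin_cases m <;> simp

/-- the sliced one-bit strategy -/
def hSlice (g : Fin 2 → (Fin 2 → Bool) → Fin 2 → Fin 2 × Bool) (y : Fin 2 → Bool) :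
    Fin 2 → Bool → Fin 2 × Bool :=
  fun j t => g j (fun m => if m = 0 then t else y j) 0

lemma winAt_slice (g : Fin 2 → (Fin 2 → Bool) → Fin 2 → Fin 2 × Bool)
    (y b : Fin 2 → Bool) :
    WinAt 2 g 0 (E2 (y, b)) ↔ Win1 (hSlice g y) b := by
  have hx : ∀ j, E2 (y, b) j = fun m => if m = 0 then b j else y j := fun j => rfl
  have hb : ∀ i : Fin 2, E2 (y, b) i 0 = b i := fun i => rfl
  have hg : ∀ j, g j (E2 (y, b) j) 0 = hSlice g y j (b j) := fun j => rfl
  unfold WinAt Win1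
  constructor
  · rintro ⟨i, h1, h2⟩
    refine ⟨i, fun j => by rw [← hg]; exact h1 j, ?_⟩
    rw [← hb i]
    refine h2.trans (Finset.sum_congr rfl (fun j _ => by rw [hg]))
  · rintro ⟨i, h1, h2⟩
    refine ⟨i, fun j => by rw [hg]; exact h1 j, ?_⟩
    rw [hb i]
    refine h2.trans (Finset.sum_congr rfl (fun j _ => by rw [hg]))

open Classical in
lemma winAt_bound_2 (g : Fin 2 → (Fin 2 → Bool) → Fin 2 → Fin 2 × Bool) :
    (Finset.univ.filter (WinAt 2 g 0)).card * 2 ≤ 2 ^ (2 * 2) := by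
  have hcard : (Finset.univ.filter (WinAt 2 g 0)).card
      = ∑ y : Fin 2 → Bool, (Finset.univ.filter (Win1 (hSlice g y))).card := by
    calc (Finset.univ.filter (WinAt 2 g 0)).card
        = ∑ x : Fin 2 → Fin 2 → Bool, if WinAt 2 g 0 x then 1 else 0 := by
          rw [Finset.sum_boole]
          simp
      _ = ∑ p : (Fin 2 → Bool) × (Fin 2 → Bool), if WinAt 2 g 0 (E2 p) then 1 else 0 :=
          (Fintype.sum_equiv E2 _ _ (fun p => rfl)).symm
      _ = ∑ y : Fin 2 → Bool, ∑ b : Fin 2 → Bool, if WinAt 2 g 0 (E2 (y, b)) then 1 else 0 :=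
          Fintype.sum_prod_type _
      _ = ∑ y : Fin 2 → Bool, (Finset.univ.filter (Win1 (hSlice g y))).card := by
          refine Finset.sum_congr rfl (fun y _ => ?_)
          refine Eq.trans (Finset.sum_congr rfl (fun b _ =>
            if_congr (winAt_slice g y b) rfl rfl)) ?_
          rw [Finset.sum_boole]
          simp
  rw [hcard]
  calc (∑ y : Fin 2 → Bool, (Finset.univ.filter (Win1 (hSlice g y))).card) * 2
      ≤ (∑ y : Fin 2 → Bool, 2) * 2 := by
        apply Nat.mul_le_mul_right
        exact Finset.sum_le_sum (fun y _ => win1_bound (hSlice g y))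
    _ ≤ 2 ^ (2 * 2) := by simp

open Classical in
lemma upper_bound (k : ℕ) (hk : 1 ≤ k) (g : Fin k → (Fin k → Bool) → Fin k → Fin k × Bool) :
    repWinProb k g ≤ 1 / 2 := by
  have hsub : Finset.univ.filter (repWin k g)
      ⊆ Finset.univ.filter (WinAt k g ⟨0, hk⟩) := by
    intro x hx
    simp only [Finset.mem_filter, Finset.mem_univ, true_and] at hx ⊢
    exact hx ⟨0, hk⟩
  have hw : (Finset.univ.filter (WinAt k g ⟨0, hk⟩)).card * 2 ≤ 2 ^ (k * k) := by
    have hcases : k = 1 ∨ k = 2 ∨ 3 ≤ k := by omega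
    rcases hcases with rfl | rfl | h3
    · exact winAt_bound_1 g ⟨0, hk⟩
    · have h0 : (⟨0, hk⟩ : Fin 2) = 0 := rfl
      rw [h0]
      exact winAt_bound_2 g
    · exact winAt_bound_ge3 k h3 g ⟨0, hk⟩
  have hle : (Finset.univ.filter (repWin k g)).card * 2 ≤ 2 ^ (k * k) :=
    le_trans (Nat.mul_le_mul_right 2 (Finset.card_le_card hsub)) hw
  rw [prob_eq, div_le_div_iff₀ (by positivity) (by norm_num)]
  have := (Nat.cast_le (α := ℝ)).mpr hle
  push_cast at this ⊢
  linarith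

theorem stmt16 (k : ℕ) (hk : 1 ≤ k) :
    (∃ g : Fin k → (Fin k → Bool) → Fin k → Fin k × Bool, 1 / 2 ≤ repWinProb k g) ∧
    (∀ g : Fin k → (Fin k → Bool) → Fin k → Fin k × Bool, repWinProb k g ≤ 1 / 2) :=
  ⟨⟨gstar k, lower_bound k hk⟩, fun g => upper_bound k hk g⟩
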